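/- For every k = (k_1,...,k_s) with 1 ≤ k_i ≤ m, every integer N_1 ≥ 0 and every integer N_2 ∈ [0, B_{τ·k}), one has Σ_{n = ỹ_m + N_1 B_{τ·k}}^{ỹ_m + N_1 B_{τ·k} + N_2 − 1} (χ_{P_k}(H_s(n)) − B_{τ·k}^{−1}) = χ_{[0,N_2)}(A_k) − N_2 B_{τ·k}^{−1}. -/

import Mathlib

/-!
Along coordinate `i`, the low `D` digits of `n` determine `φ_b(n)` up to an error in
`[0, b^{-D})`, so `φ_b(n)` lies in the `b`-adic interval `[φ_b(e), φ_b(e) + b^{-D})`, `e < b^D`,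
exactly when `n ≡ e (mod b^D)`. The `i`-th side of `P_k` is such an interval with
`e = ẏ_{i,τ_i(k_i-1)}`, and the CRT data give `ỹ_m + A_k ≡ ẏ_{i,τ_i(k_i-1)} (mod b_i^{τ_i k_i})`
for every `i`. Hence `H_s(n) ∈ P_k` iff `n ≡ ỹ_m + A_k (mod B_{τ·k})`, and the window of
`N₂ < B_{τ·k}` consecutive integers starting at `ỹ_m + N₁ B_{τ·k}` contains such an `n` exactly
when `A_k < N₂`.
-/

open Finset

open scoped Classical

/-- The radical inverse function in base `b`: `φ_b(n) = Σ_j n_j b^{-j-1}`. -/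
noncomputable def radInv (b n : ℕ) : ℝ :=
  ∑' j : ℕ, ((n / b ^ j % b : ℕ) : ℝ) / (b : ℝ) ^ (j + 1)

/-- The axis-parallel box `[0, y) = ∏_i [0, y_i)`. -/
def box {s : ℕ} (y : Fin s → ℝ) : Set (Fin s → ℝ) :=
  Set.univ.pi fun i => Set.Ico 0 (y i)

/-- The discrepancy function `Δ(y, (x_n)_{n=a}^{a+N-1})`. -/
noncomputable def disc {s : ℕ} (x : ℕ → Fin s → ℝ) (a N : ℕ) (y : Fin s → ℝ) : ℝ :=
  ∑ n ∈ Finset.Ico a (a + N),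
    ((box y).indicator (fun _ => (1 : ℝ)) (x n) - ∏ i, y i)

/-- The star discrepancy of `(x_n)_{n=a}^{a+N-1}`. -/
noncomputable def Dstar {s : ℕ} (x : ℕ → Fin s → ℝ) (a N : ℕ) : ℝ :=
  sSup {v : ℝ | ∃ y : Fin s → ℝ, (∀ i, y i ∈ Set.Ico (0 : ℝ) 1) ∧
    v = |disc x a N y| / (N : ℝ)}

/-- `(x_n)_{0 ≤ n < b^m}` is a `(t,m,s)`-net in base `b`. -/
def IsNet {s : ℕ} (b t m : ℕ) (x : ℕ → Fin s → ℝ) : Prop :=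
  (∀ n < b ^ m, ∀ i, x n i ∈ Set.Ico (0 : ℝ) 1) ∧
  ∀ d a : Fin s → ℕ, (∀ i, a i < b ^ d i) → (∑ i, d i) + t = m →
    ((Finset.range (b ^ m)).filter
      (fun n => ∀ i, x n i ∈ Set.Ico ((a i : ℝ) / b ^ d i) ((a i + 1 : ℝ) / b ^ d i))).card
      = b ^ t

/-- The `j`-th `b`-adic digit (`j ≥ 1`) of a real number `x ∈ [0,1)`. -/
noncomputable def bdigit (b : ℕ) (x : ℝ) (j : ℕ) : ℕ := (⌊x * (b : ℝ) ^ j⌋ % (b : ℤ)).toNat % b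

/-- The `b`-adic absolute valuation `‖x‖_b = b^{-(k+1)}` where the digits
`x_1, …, x_k` vanish and `x_{k+1} ≠ 0`; it is `0` when all digits vanish. -/
noncomputable def bval (b : ℕ) (x : ℝ) : ℝ :=
  if h : ∃ j, 1 ≤ j ∧ bdigit b x j ≠ 0 then
    (1 : ℝ) / (b : ℝ) ^ sInf {j | 1 ≤ j ∧ bdigit b x j ≠ 0}
  else 0

/-- The `b`-adic absolute valuation of a vector, `‖x‖_b = ∏_j ‖x^{(j)}‖_b`. -/
noncomputable def bvalVec {s : ℕ} (b : ℕ) (x : Fin s → ℝ) : ℝ := ∏ i, bval b (x i)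

/-- Digitwise subtraction modulo `b`: `x ⊖ σ`. -/
noncomputable def bsub (b : ℕ) (x σ : ℝ) : ℝ :=
  ∑' j : ℕ, (((bdigit b x (j + 1) + b - bdigit b σ (j + 1)) % b : ℕ) : ℝ) / (b : ℝ) ^ (j + 1)

/-- Digitwise addition modulo `b`: `x ⊕ σ`. -/
noncomputable def badd (b : ℕ) (x σ : ℝ) : ℝ :=
  ∑' j : ℕ, (((bdigit b x (j + 1) + bdigit b σ (j + 1)) % b : ℕ) : ℝ) / (b : ℝ) ^ (j + 1)

/-- A `b^m`-point set in `[0,1)^s` is `d`-admissible in base `b`. -/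
def IsAdmissible {s : ℕ} (b m : ℕ) (d : ℤ) (x : ℕ → Fin s → ℝ) : Prop :=
  ∀ k n : ℕ, k < n → n < b ^ m →
    bvalVec b (fun i => bsub b (x n i) (x k i)) > (b : ℝ) ^ (-((m : ℤ) + d))

/-- The two-dimensional Halton sequence in bases `2` and `3`. -/
noncomputable def H23 : ℕ → Fin 2 → ℝ := fun n => ![radInv 2 n, radInv 3 n]

/-- `ytil` is the quantity `ỹ_m` for the Halton sequence in bases `2` and `3`
(so that `τ₁ = 2`, `τ₂ = 1`). -/
def IsYtilde (m ytil : ℕ) : Prop :=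
  ytil < 2 ^ (2 * (m + 1)) * 3 ^ (m + 1) ∧
  ∃ M₁ M₂ : ℤ,
    M₁ * 3 ^ (m + 1) ≡ 1 [ZMOD (2 : ℤ) ^ (2 * (m + 1))] ∧
    M₂ * 2 ^ (2 * (m + 1)) ≡ 1 [ZMOD (3 : ℤ) ^ (m + 1)] ∧
    (ytil : ℤ) ≡ M₁ * 3 ^ (m + 1) * (∑ j ∈ Finset.Icc 1 (m + 1), (2 : ℤ) ^ (2 * j - 1))
        + M₂ * 2 ^ (2 * (m + 1)) * (∑ j ∈ Finset.Icc 1 (m + 1), (3 : ℤ) ^ (j - 1))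
      [ZMOD (2 : ℤ) ^ (2 * (m + 1)) * 3 ^ (m + 1)]

section RadicalInverse

variable {b : ℕ}

lemma radInv_eq_sum_range (hb : 1 < b) {n J : ℕ} (hn : n < b ^ J) :
    radInv b n = ∑ j ∈ range J, ((n / b ^ j % b : ℕ) : ℝ) / (b : ℝ) ^ (j + 1) := by
  refine tsum_eq_sum fun j hj => ?_
  rw [Nat.div_eq_of_lt (hn.trans_le (Nat.pow_le_pow_right (by omega) (by simpa using hj)))]
  simp

@[simp]
lemma radInv_zero (b : ℕ) : radInv b 0 = 0 := by simp [radInv]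

lemma radInv_eq_mod_add_div (hb : 1 < b) (n : ℕ) :
    radInv b n = ((n % b : ℕ) + radInv b (n / b)) / b := by
  have hn : n < b ^ (n + 1) := (Nat.lt_pow_self hb).trans (Nat.pow_lt_pow_succ hb)
  have hnb : n / b < b ^ n := (Nat.div_le_self n b).trans_lt (Nat.lt_pow_self hb)
  rw [radInv_eq_sum_range hb hn, radInv_eq_sum_range hb hnb, sum_range_succ', add_div,
    sum_div, add_comm]
  congr 1
  · simp
  · refine sum_congr rfl fun j _ => ?_
    rw [Nat.div_div_eq_div_mul, ← pow_succ', div_div, ← pow_succ]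

lemma radInv_nonneg (b n : ℕ) : 0 ≤ radInv b n :=
  tsum_nonneg fun _ => by positivity

lemma radInv_lt_one (hb : 1 < b) (n : ℕ) : radInv b n < 1 := by
  induction n using Nat.strong_induction_on with
  | _ n ih =>
    rcases n.eq_zero_or_pos with rfl | hn
    · simp
    have hdigit : ((n % b : ℕ) : ℝ) ≤ b - 1 := by
      have := Nat.mod_lt n (by omega : 0 < b)
      rw [le_sub_iff_add_le]
      exact_mod_cast this
    rw [radInv_eq_mod_add_div hb, div_lt_one (by positivity)]
    linarith [ih (n / b) (Nat.div_lt_self hn hb)]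

lemma radInv_add_pow_mul (hb : 1 < b) {a p : ℕ} (ha : a < b ^ p) (q : ℕ) :
    radInv b (a + b ^ p * q) = radInv b a + radInv b q / (b : ℝ) ^ p := by
  induction p generalizing a with
  | zero => simp_all
  | succ p ih =>
    have hmod : (a + b ^ (p + 1) * q) % b = a % b := by
      rw [pow_succ', mul_assoc, Nat.add_mul_mod_self_left]
    have hdiv : (a + b ^ (p + 1) * q) / b = a / b + b ^ p * q := by
      rw [pow_succ', mul_assoc, Nat.add_mul_div_left _ _ (by omega)]
    have hab : a / b < b ^ p := Nat.div_lt_of_lt_mul (by rwa [← pow_succ'])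
    rw [radInv_eq_mod_add_div hb, hmod, hdiv, ih hab, radInv_eq_mod_add_div hb a]
    field_simp
    ring

lemma radInv_pow (hb : 1 < b) (t : ℕ) : radInv b (b ^ t) = ((b : ℝ) ^ (t + 1))⁻¹ := by
  have h := radInv_add_pow_mul hb (Nat.pow_pos (by omega) : 0 < b ^ t) 1
  rw [zero_add, mul_one] at h
  rw [h, radInv_eq_mod_add_div hb 1, Nat.mod_eq_of_lt hb, Nat.div_eq_of_lt hb]
  simp [pow_succ, div_eq_mul_inv]

lemma exists_radInv_eq_div_pow (hb : 1 < b) {n D : ℕ} (hn : n < b ^ D) :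
    ∃ r : ℕ, radInv b n = r / (b : ℝ) ^ D := by
  induction D generalizing n with
  | zero => exact ⟨0, by simp_all⟩
  | succ D ih =>
    obtain ⟨r, hr⟩ := ih (Nat.div_lt_of_lt_mul (by rwa [← pow_succ']) : n / b < b ^ D)
    refine ⟨n % b * b ^ D + r, ?_⟩
    rw [radInv_eq_mod_add_div hb, hr]
    push_cast
    field_simp
    ring

lemma natCast_add_radInv_floor (hb : 1 < b) (r n : ℕ) : ⌊(r : ℝ) + radInv b n⌋ = r := by
  rw [Int.floor_natCast_add, Int.floor_eq_zero_iff.2 ⟨radInv_nonneg b n, radInv_lt_one hb n⟩,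
    add_zero]

lemma radInv_injective (hb : 1 < b) : Function.Injective (radInv b) := by
  suffices h : ∀ D n n', n < b ^ D → n' < b ^ D → radInv b n = radInv b n' → n = n' from
    fun n n' hnn' => h (n + n') n n' ((Nat.lt_pow_self hb).trans_le' (by omega))
      ((Nat.lt_pow_self hb).trans_le' (by omega)) hnn'
  intro D
  induction D with
  | zero => intro n n' hn hn' _; simp_all
  | succ D ih =>
    intro n n' hn hn' h
    have hb0 : (b : ℝ) ≠ 0 := by positivity
    rw [radInv_eq_mod_add_div hb n, radInv_eq_mod_add_div hb n', div_left_inj' hb0] at h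
    have hmod : n % b = n' % b := by
      exact_mod_cast (natCast_add_radInv_floor hb _ _).symm.trans
        ((congrArg Int.floor h).trans (natCast_add_radInv_floor hb _ _))
    have hdiv : n / b = n' / b := ih _ _ (Nat.div_lt_of_lt_mul (by rwa [← pow_succ']))
      (Nat.div_lt_of_lt_mul (by rwa [← pow_succ'])) (by rw [hmod] at h; linarith)
    rw [← Nat.div_add_mod n b, ← Nat.div_add_mod n' b, hdiv, hmod]

lemma radInv_mem_Ico_iff (hb : 1 < b) {n e D : ℕ} (he : e < b ^ D) :
    radInv b n ∈ Set.Ico (radInv b e) (radInv b e + ((b : ℝ) ^ D)⁻¹) ↔ n ≡ e [MOD b ^ D] := by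
  have hc : (0 : ℝ) < (b : ℝ) ^ D := by positivity
  obtain ⟨r, hr⟩ := exists_radInv_eq_div_pow hb (Nat.mod_lt n (by positivity) : n % b ^ D < b ^ D)
  obtain ⟨r', hr'⟩ := exists_radInv_eq_div_pow hb he
  have hsplit : radInv b n = (r + radInv b (n / b ^ D)) / (b : ℝ) ^ D := by
    conv_lhs => rw [← Nat.mod_add_div n (b ^ D)]
    rw [radInv_add_pow_mul hb (Nat.mod_lt n (by positivity)), hr, add_div]
  calc radInv b n ∈ Set.Ico (radInv b e) (radInv b e + ((b : ℝ) ^ D)⁻¹)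
      ↔ (r : ℝ) + radInv b (n / b ^ D) ∈ Set.Ico (r' : ℝ) (r' + 1) := by
        rw [hsplit, hr', show (r' : ℝ) / (b : ℝ) ^ D + ((b : ℝ) ^ D)⁻¹ = (r' + 1) / (b : ℝ) ^ D
          by ring, Set.mem_Ico, Set.mem_Ico, div_le_div_iff_of_pos_right hc,
          div_lt_div_iff_of_pos_right hc]
    _ ↔ ⌊(r : ℝ) + radInv b (n / b ^ D)⌋ = r' := by
        rw [Int.floor_eq_iff, Set.mem_Ico]; push_cast; rfl
    _ ↔ radInv b (n % b ^ D) = radInv b e := by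
        rw [natCast_add_radInv_floor hb, hr, hr', div_left_inj' hc.ne', Nat.cast_inj, Nat.cast_inj]
    _ ↔ n ≡ e [MOD b ^ D] := by
        rw [(radInv_injective hb).eq_iff, Nat.ModEq, Nat.mod_eq_of_lt he]

end RadicalInverse

/-- The paper's `ẏ_{i,τ_i k}` for `b = b_i`, `τ = τ_i`. -/
def yDot (b τ k : ℕ) : ℕ := ∑ j ∈ Icc 1 k, b ^ (j * τ - 1)

section yDot

variable {b τ : ℕ}

lemma yDot_succ (b τ k : ℕ) : yDot b τ (k + 1) = yDot b τ k + b ^ (τ * (k + 1) - 1) := by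
  rw [yDot, yDot, sum_Icc_succ_top (by omega), mul_comm]

lemma yDot_lt_pow (hb : 1 < b) (hτ : 1 ≤ τ) (k : ℕ) : yDot b τ k < b ^ (τ * k) := by
  induction k with
  | zero => simp [yDot]
  | succ k ih =>
    have hle : b ^ (τ * k) ≤ b ^ (τ * (k + 1) - 1) :=
      Nat.pow_le_pow_right (by omega) (by rw [mul_add]; omega)
    have hpow : b ^ (τ * (k + 1)) = b ^ (τ * (k + 1) - 1) * b := by
      rw [← pow_succ, Nat.sub_add_cancel (by nlinarith)]
    rw [yDot_succ, hpow]
    nlinarith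

lemma yDot_modEq_of_le (hτ : 1 ≤ τ) {k t : ℕ} (hkt : k ≤ t) :
    yDot b τ t ≡ yDot b τ k [MOD b ^ (τ * k)] := by
  induction t, hkt using Nat.le_induction with
  | base => rfl
  | succ t hkt ih =>
    have hdvd : b ^ (τ * k) ∣ b ^ (τ * (t + 1) - 1) :=
      pow_dvd_pow b (by have := Nat.mul_le_mul_left τ hkt; rw [mul_add]; omega)
    simpa [yDot_succ] using ih.add (Nat.modEq_zero_iff_dvd.2 hdvd)

lemma radInv_yDot (hb : 1 < b) (hτ : 1 ≤ τ) (k : ℕ) :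
    radInv b (yDot b τ k) = ∑ j ∈ Icc 1 k, ((b : ℝ) ^ (j * τ))⁻¹ := by
  induction k with
  | zero => simp [yDot]
  | succ k ih =>
    have hpow : b ^ (τ * (k + 1) - 1) = b ^ (τ * k) * b ^ (τ - 1) := by
      rw [← pow_add]; congr 1; rw [mul_add]; omega
    rw [yDot_succ, hpow, radInv_add_pow_mul hb (yDot_lt_pow hb hτ k), ih, radInv_pow hb,
      sum_Icc_succ_top (by omega), Nat.sub_add_cancel hτ, div_eq_mul_inv, ← mul_inv, ← pow_add]
    congr 3
    ring

lemma radInv_mem_Ico_iff_modEq_yDot (hb : 1 < b) (hτ : 1 ≤ τ) {k : ℕ} (hk : 1 ≤ k) (n : ℕ) :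
    radInv b n ∈ Set.Ico ((∑ j ∈ Icc 1 k, ((b : ℝ) ^ (j * τ))⁻¹) - ((b : ℝ) ^ (τ * k))⁻¹)
        (∑ j ∈ Icc 1 k, ((b : ℝ) ^ (j * τ))⁻¹) ↔ n ≡ yDot b τ (k - 1) [MOD b ^ (τ * k)] := by
  obtain ⟨k, rfl⟩ := Nat.exists_eq_add_of_le' hk
  rw [sum_Icc_succ_top (by omega), ← radInv_yDot hb hτ, mul_comm (k + 1), add_sub_cancel_right,
    Nat.add_sub_cancel]
  exact radInv_mem_Ico_iff hb ((yDot_lt_pow hb hτ k).trans_le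
    (Nat.pow_le_pow_right (by omega) (by nlinarith)))

lemma add_modEq_yDot_pred (hτ : 1 ≤ τ) {k t y A : ℕ} (hk : 1 ≤ k) (hkt : k ≤ t)
    (hy : y ≡ yDot b τ t [MOD b ^ (τ * t)]) (hA : A + b ^ (τ * k - 1) ≡ 0 [MOD b ^ (τ * k)]) :
    y + A ≡ yDot b τ (k - 1) [MOD b ^ (τ * k)] := by
  have hy' := (hy.of_dvd (pow_dvd_pow b (Nat.mul_le_mul_left τ hkt))).trans
    (yDot_modEq_of_le hτ hkt)
  obtain ⟨k, rfl⟩ := Nat.exists_eq_add_of_le' hk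
  refine Nat.ModEq.add_right_cancel' (b ^ (τ * (k + 1) - 1)) ?_
  rw [add_assoc, Nat.add_sub_cancel, ← yDot_succ]
  simpa using hy'.add hA

end yDot

lemma Nat.modEq_prod_iff {ι : Type*} [Fintype ι] {s : ι → ℕ}
    (hs : Pairwise fun i j => Nat.Coprime (s i) (s j)) {a c : ℕ} : a ≡ c [MOD ∏ i, s i] ↔ ∀ i, a ≡ c [MOD s i] := by
  refine ⟨fun h i => h.of_dvd (dvd_prod_of_mem s (mem_univ i)), fun h => ?_⟩
  rw [Nat.modEq_iff_dvd, Nat.cast_prod]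
  exact Fintype.prod_dvd_of_coprime (fun i j hij => Nat.isCoprime_iff_coprime.2 (hs hij))
    fun i => Nat.modEq_iff_dvd.1 (h i)

lemma Int.sum_mul_prod_erase_mul_modEq {ι : Type*} [Fintype ι] [DecidableEq ι] {q M : ι → ℤ}
    (hM : ∀ i, M i * ∏ j ∈ univ.erase i, q j ≡ 1 [ZMOD q i]) (c : ι → ℤ) (i : ι) :
    ∑ j, M j * (∏ l ∈ univ.erase j, q l) * c j ≡ c i [ZMOD q i] := by
  have hrest : ∑ j ∈ univ.erase i, M j * (∏ l ∈ univ.erase j, q l) * c j ≡ 0 [ZMOD q i] :=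
    Int.modEq_zero_iff_dvd.2 <| dvd_sum fun j hj => Dvd.dvd.mul_right (Dvd.dvd.mul_left
      (dvd_prod_of_mem q (mem_erase.2 ⟨(ne_of_mem_erase hj).symm, mem_univ i⟩)) _) _
  calc ∑ j, M j * (∏ l ∈ univ.erase j, q l) * c j
      = M i * (∏ l ∈ univ.erase i, q l) * c i
        + ∑ j ∈ univ.erase i, M j * (∏ l ∈ univ.erase j, q l) * c j :=
        (add_sum_erase _ _ (mem_univ i)).symm
    _ ≡ 1 * c i + 0 [ZMOD q i] := ((hM i).mul_right (c i)).add hrest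
    _ = c i := by ring

lemma sum_Ico_ite_modEq {a A B N : ℕ} (hA : A < B) (hN : N ≤ B) :
    ∑ n ∈ Ico a (a + N), (if n ≡ a + A [MOD B] then (1 : ℝ) else 0) = if A < N then 1 else 0 := by
  have hiff : ∀ n ∈ Ico a (a + N), n ≡ a + A [MOD B] ↔ n = a + A := by
    intro n hn
    obtain ⟨d, rfl⟩ := Nat.exists_eq_add_of_le (mem_Ico.1 hn).1
    have hd : d < B := by have := (mem_Ico.1 hn).2; omega
    rw [add_right_inj]
    refine ⟨fun h => ?_, fun h => h ▸ rfl⟩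
    simpa [Nat.ModEq, Nat.mod_eq_of_lt hd, Nat.mod_eq_of_lt hA] using h.add_left_cancel' a
  rw [sum_congr rfl fun n hn => if_congr (hiff n hn) rfl rfl, sum_ite_eq']
  simp [mem_Ico]

theorem halton_Pk_partial_sum_general (s m : ℕ) (b : Fin s → ℕ) (hb : ∀ i, 2 ≤ b i)
    (hcop : ∀ i j, i ≠ j → Nat.Coprime (b i) (b j))
    (τ : Fin s → ℕ)
    (hτpos : ∀ i, 1 ≤ τ i)
    (k : Fin s → ℕ) (hk : ∀ i, 1 ≤ k i ∧ k i ≤ m)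
    (M : Fin s → ℤ)
    (hM : ∀ i, M i * ∏ j ∈ Finset.univ.erase i, (b j : ℤ) ^ (τ j * k j) ≡ 1
      [ZMOD ((b i : ℤ) ^ (τ i * k i))])
    (A : ℕ) (hA : A < ∏ i, b i ^ (τ i * k i))
    (hA2 : (A : ℤ) ≡ -∑ i, M i * ((b i : ℤ) ^ (τ i * k i - 1) *
        ∏ j ∈ Finset.univ.erase i, (b j : ℤ) ^ (τ j * k j))
      [ZMOD (∏ i, (b i : ℤ) ^ (τ i * k i))])
    (M' : Fin s → ℤ)
    (hM' : ∀ i, M' i * ∏ j ∈ Finset.univ.erase i, (b j : ℤ) ^ (τ j * (m + 1)) ≡ 1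
      [ZMOD ((b i : ℤ) ^ (τ i * (m + 1)))])
    (ytil : ℕ)
    (hy2 : (ytil : ℤ) ≡ ∑ i, M' i * (∏ j ∈ Finset.univ.erase i, (b j : ℤ) ^ (τ j * (m + 1))) *
        (∑ j ∈ Finset.Icc 1 (m + 1), (b i : ℤ) ^ (j * τ i - 1))
      [ZMOD (∏ i, (b i : ℤ) ^ (τ i * (m + 1)))])
    (N₁ N₂ : ℕ) (hN₂ : N₂ < ∏ i, b i ^ (τ i * k i)) :
    ∑ n ∈ Finset.Ico (ytil + N₁ * ∏ i, b i ^ (τ i * k i))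
        (ytil + N₁ * (∏ i, b i ^ (τ i * k i)) + N₂),
      ((Set.univ.pi (fun i =>
          Set.Ico ((∑ j ∈ Finset.Icc 1 (k i), ((b i : ℝ) ^ (j * τ i))⁻¹)
              - ((b i : ℝ) ^ (τ i * k i))⁻¹)
            (∑ j ∈ Finset.Icc 1 (k i), ((b i : ℝ) ^ (j * τ i))⁻¹))).indicator
          (fun _ => (1 : ℝ)) (fun i => radInv (b i) n)
        - (((∏ i, b i ^ (τ i * k i) : ℕ) : ℝ))⁻¹)
      = (if A < N₂ then (1 : ℝ) else 0) - (N₂ : ℝ) * (((∏ i, b i ^ (τ i * k i) : ℕ) : ℝ))⁻¹ := by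
  set B := ∏ i, b i ^ (τ i * k i)
  have hytil : ∀ i, ytil ≡ yDot (b i) (τ i) (m + 1) [MOD b i ^ (τ i * (m + 1))] := fun i =>
    Int.natCast_modEq_iff.1 <| by
      simpa [yDot] using (hy2.of_dvd (dvd_prod_of_mem _ (mem_univ i))).trans
        (Int.sum_mul_prod_erase_mul_modEq hM' _ i)
  have hAmod : ∀ i, A + b i ^ (τ i * k i - 1) ≡ 0 [MOD b i ^ (τ i * k i)] := by
    intro i
    rw [sum_congr rfl fun j _ => by rw [mul_comm ((b j : ℤ) ^ _), ← mul_assoc]] at hA2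
    have := ((hA2.of_dvd (dvd_prod_of_mem _ (mem_univ i))).trans
      (Int.sum_mul_prod_erase_mul_modEq hM _ i).neg).add_right ((b i : ℤ) ^ (τ i * k i - 1))
    rw [neg_add_cancel] at this
    exact Int.natCast_modEq_iff.1 (by push_cast; exact this)
  have hmem : ∀ n, (∀ i, n ≡ yDot (b i) (τ i) (k i - 1) [MOD b i ^ (τ i * k i)])
      ↔ n ≡ ytil + N₁ * B + A [MOD B] := by
    intro n
    have hshift : ytil + N₁ * B + A ≡ ytil + A [MOD B] := by
      rw [Nat.ModEq, add_right_comm, Nat.add_mul_mod_self_right]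
    have key : ∀ i, ytil + A ≡ yDot (b i) (τ i) (k i - 1) [MOD b i ^ (τ i * k i)] := fun i =>
      add_modEq_yDot_pred (hτpos i) (hk i).1 (by have := hk i; omega) (hytil i) (hAmod i)
    calc _ ↔ ∀ i, n ≡ ytil + A [MOD b i ^ (τ i * k i)] :=
          forall_congr' fun i => ⟨fun h => h.trans (key i).symm, fun h => h.trans (key i)⟩
      _ ↔ n ≡ ytil + A [MOD B] := (Nat.modEq_prod_iff fun i j hij => (hcop i j hij).pow _ _).symm
      _ ↔ _ := ⟨fun h => h.trans hshift.symm, fun h => h.trans hshift⟩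
  calc _ = ∑ n ∈ Ico (ytil + N₁ * B) (ytil + N₁ * B + N₂),
        ((if n ≡ ytil + N₁ * B + A [MOD B] then 1 else 0) - (B : ℝ)⁻¹) :=
        sum_congr rfl fun n _ => by
          rw [Set.indicator_apply, if_congr (Set.mem_univ_pi.trans <| (forall_congr' fun i =>
            radInv_mem_Ico_iff_modEq_yDot (hb i) (hτpos i) (hk i).1 n).trans (hmem n)) rfl rfl]
    _ = _ := by
        rw [sum_sub_distrib, sum_Ico_ite_modEq hA hN₂.le, sum_const, Nat.card_Ico,
          add_tsub_cancel_left, nsmul_eq_mul]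

/-- The partial block sums of the centred counting function of `P_k`, started at
`ỹ_m`, are given by `χ_{[0,N₂)}(A_k) − N₂/B_{τ·k}`. -/
theorem halton_Pk_partial_sum (s m : ℕ) (hs : 1 ≤ s) (b : Fin s → ℕ) (hb : ∀ i, 2 ≤ b i)
    (hcop : ∀ i j, i ≠ j → Nat.Coprime (b i) (b j))
    (τ : Fin s → ℕ)
    (hτ : ∀ i, τ i = sInf {l : ℕ | 1 ≤ l ∧ l < (∏ j ∈ Finset.univ.erase i, b j) ∧
      b i ^ l % (∏ j ∈ Finset.univ.erase i, b j) = 1})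
    (hτpos : ∀ i, 1 ≤ τ i)
    (k : Fin s → ℕ) (hk : ∀ i, 1 ≤ k i ∧ k i ≤ m)
    (M : Fin s → ℤ)
    (hM : ∀ i, M i * ∏ j ∈ Finset.univ.erase i, (b j : ℤ) ^ (τ j * k j) ≡ 1
      [ZMOD ((b i : ℤ) ^ (τ i * k i))])
    (A : ℕ) (hA : A < ∏ i, b i ^ (τ i * k i))
    (hA2 : (A : ℤ) ≡ -∑ i, M i * ((b i : ℤ) ^ (τ i * k i - 1) *
        ∏ j ∈ Finset.univ.erase i, (b j : ℤ) ^ (τ j * k j))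
      [ZMOD (∏ i, (b i : ℤ) ^ (τ i * k i))])
    (M' : Fin s → ℤ)
    (hM' : ∀ i, M' i * ∏ j ∈ Finset.univ.erase i, (b j : ℤ) ^ (τ j * (m + 1)) ≡ 1
      [ZMOD ((b i : ℤ) ^ (τ i * (m + 1)))])
    (ytil : ℕ) (hy : ytil < ∏ i, b i ^ (τ i * (m + 1)))
    (hy2 : (ytil : ℤ) ≡ ∑ i, M' i * (∏ j ∈ Finset.univ.erase i, (b j : ℤ) ^ (τ j * (m + 1))) *
        (∑ j ∈ Finset.Icc 1 (m + 1), (b i : ℤ) ^ (j * τ i - 1))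
      [ZMOD (∏ i, (b i : ℤ) ^ (τ i * (m + 1)))])
    (N₁ N₂ : ℕ) (hN₂ : N₂ < ∏ i, b i ^ (τ i * k i)) :
    ∑ n ∈ Finset.Ico (ytil + N₁ * ∏ i, b i ^ (τ i * k i))
        (ytil + N₁ * (∏ i, b i ^ (τ i * k i)) + N₂),
      ((Set.univ.pi (fun i =>
          Set.Ico ((∑ j ∈ Finset.Icc 1 (k i), ((b i : ℝ) ^ (j * τ i))⁻¹)
              - ((b i : ℝ) ^ (τ i * k i))⁻¹)
            (∑ j ∈ Finset.Icc 1 (k i), ((b i : ℝ) ^ (j * τ i))⁻¹))).indicator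
          (fun _ => (1 : ℝ)) (fun i => radInv (b i) n)
        - (((∏ i, b i ^ (τ i * k i) : ℕ) : ℝ))⁻¹)
      = (if A < N₂ then (1 : ℝ) else 0) - (N₂ : ℝ) * (((∏ i, b i ^ (τ i * k i) : ℕ) : ℝ))⁻¹ :=
  halton_Pk_partial_sum_general s m b hb hcop τ hτpos k hk M hM A hA hA2 M' hM' ytil hy2 N₁ N₂ hN₂
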